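/- arXiv:2604.25414 — 8 statements merged into one kernel-verified Lean document; each statement's English description precedes it below -/
import Mathlib

section
/- Let U be an F_p-linear subspace of F_q and let h(x) = ∏_{u∈U}(x − u) ∈ F_q[x]. Then any function f : F_q → F_q which is constant on each coset of U may be written f = g ∘ h for some polynomial g ∈ F_q[x] of degree strictly less than q/|U|. -/
open Polynomial

/-- Let `U` be an `𝔽_p`-linear subspace of `𝔽_q` and
`h(x) = ∏_{u ∈ U} (x - u) ∈ 𝔽_q[x]`. Then any function `f : 𝔽_q → 𝔽_q` which is constant
on each coset of `U` may be written `f = g ∘ h` for some polynomial `g ∈ 𝔽_q[x]` of degree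
strictly less than `q / |U|`. -/
theorem stmt1 (p n : ℕ) [Fact p.Prime] (hn : 1 ≤ n) {F : Type*} [Field F] [Fintype F]
    [Algebra (ZMod p) F] (hcard : Fintype.card F = p ^ n)
    (U : Submodule (ZMod p) F) [Fintype ↥U]
    (h : F[X]) (hh : h = ∏ u : U, (X - C (u : F)))
    (f : F → F) (hf : ∀ x : F, ∀ u ∈ U, f (x + u) = f x) :
    ∃ g : F[X], g.degree < (Fintype.card F / Fintype.card ↥U : ℕ) ∧
      ∀ x : F, f x = g.eval (h.eval x) := by
  classical
  set k := Fintype.card ↥U with hkdef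
  have hk : 0 < k := Fintype.card_pos
  -- h is constant on cosets of U
  have lem1 : ∀ x : F, ∀ u : U, h.eval (x + (u : F)) = h.eval x := by
    intro x u
    rw [hh]
    simp only [eval_prod, eval_sub, eval_X, eval_C]
    exact (Fintype.prod_equiv (Equiv.addRight u) (fun v : U => x - (v : F))
      (fun v : U => x + (u : F) - (v : F)) (fun v => by
        simp only [Equiv.coe_addRight, Submodule.coe_add]; ring)).symm
  -- h is monic of natDegree k
  have hmonic : h.Monic := by
    rw [hh]; exact monic_prod_of_monic _ _ fun u _ => monic_X_sub_C _
  have hdeg : h.natDegree = k := by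
    rw [hh, natDegree_prod _ _ (fun u _ => X_sub_C_ne_zero _)]
    simp [hkdef, Finset.card_univ]
  -- key : equal values of h imply same coset
  have key : ∀ x y : F, h.eval x = h.eval y → y - x ∈ U := by
    intro x y hxy
    by_contra hyU
    set T : Finset F := Finset.image (fun u : U => x + (u : F)) Finset.univ with hT
    have hTcard : T.card = k := by
      rw [hT, Finset.card_image_of_injective _ (fun a b hab => by
        apply Subtype.ext; exact add_left_cancel hab), Finset.card_univ]
    have hyT : y ∉ T := by
      rw [hT]
      simp only [Finset.mem_image, Finset.mem_univ, true_and]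
      rintro ⟨u, hu⟩
      apply hyU
      have : y - x = (u : F) := by rw [← hu]; ring
      rw [this]; exact u.2
    set P : F[X] := h - C (h.eval x) with hP
    have hPdeg : P.natDegree = k := by rw [hP, natDegree_sub_C, hdeg]
    have hP0 : P ≠ 0 := by
      intro h0
      rw [h0, natDegree_zero] at hPdeg
      omega
    have hsub : insert y T ⊆ P.roots.toFinset := by
      intro z hz
      rw [Multiset.mem_toFinset, mem_roots hP0]
      rcases Finset.mem_insert.mp hz with rfl | hzT
      · simp [hP, IsRoot, ← hxy]
      · rw [hT, Finset.mem_image] at hzT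
        obtain ⟨u, _, rfl⟩ := hzT
        simp [hP, IsRoot, lem1 x u]
    have hle : k + 1 ≤ k := by
      calc k + 1 = (insert y T).card := by rw [Finset.card_insert_of_notMem hyT, hTcard]
        _ ≤ P.roots.toFinset.card := Finset.card_le_card hsub
        _ ≤ Multiset.card P.roots := P.roots.toFinset_card_le
        _ ≤ P.natDegree := P.card_roots'
        _ = k := hPdeg
    omega
  -- each fiber of eval h has exactly k elements
  have fibcard : ∀ x₀ : F,
      (Finset.univ.filter fun z : F => h.eval z = h.eval x₀).card = k := by
    intro x₀
    have heq : (Finset.univ.filter fun z : F => h.eval z = h.eval x₀)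
        = Finset.image (fun u : U => x₀ + (u : F)) Finset.univ := by
      ext z
      simp only [Finset.mem_filter, Finset.mem_univ, true_and, Finset.mem_image]
      constructor
      · intro hz
        exact ⟨⟨z - x₀, key x₀ z hz.symm⟩, show x₀ + (z - x₀) = z by ring⟩
      · rintro ⟨u, _, rfl⟩
        exact lem1 x₀ u
    rw [heq, Finset.card_image_of_injective _ (fun a b hab => by
      apply Subtype.ext; exact add_left_cancel hab), Finset.card_univ]
  set S : Finset F := Finset.image (fun x : F => h.eval x) Finset.univ with hS
  have hScard : S.card * k = Fintype.card F := by
    have hsum := Finset.card_eq_sum_card_fiberwise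
      (f := fun x : F => h.eval x) (s := Finset.univ) (t := S)
      (fun x _ => Finset.mem_image_of_mem _ (Finset.mem_univ x))
    rw [Finset.card_univ] at hsum
    calc S.card * k = ∑ _c ∈ S, k := by rw [Finset.sum_const, smul_eq_mul]
      _ = ∑ c ∈ S, (Finset.univ.filter fun z : F => h.eval z = c).card := by
          refine Finset.sum_congr rfl fun c hc => ?_
          obtain ⟨x₀, _, rfl⟩ := Finset.mem_image.mp hc
          exact (fibcard x₀).symm
      _ = Fintype.card F := hsum.symm
  have hSq : Fintype.card F / k = S.card := by
    rw [← hScard, Nat.mul_div_cancel _ hk]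
  -- section of eval h
  set r : F → F := Function.invFun (fun x : F => h.eval x) with hr
  have hrval : ∀ x : F, h.eval (r x) = x → True := fun _ _ => trivial
  have hrsec : ∀ x : F, h.eval (r (h.eval x)) = h.eval x := fun x =>
    Function.invFun_eq (f := fun x : F => h.eval x) ⟨x, rfl⟩
  refine ⟨Lagrange.interpolate S id (f ∘ r), ?_, ?_⟩
  · rw [hSq]
    exact Lagrange.degree_interpolate_lt _ (fun a _ b _ hab => hab)
  · intro x
    have hx : h.eval x ∈ S := Finset.mem_image_of_mem _ (Finset.mem_univ x)
    have := Lagrange.eval_interpolate_at_node (f ∘ r) (fun a _ b _ hab => hab) hx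
    rw [show (id : F → F) = fun a : F => a from rfl, this]
    have hmem : x - r (h.eval x) ∈ U := key (r (h.eval x)) x (hrsec x)
    have := hf (r (h.eval x)) _ hmem
    simpa using this
end

section
/- Given a function f : F_q → F_q and an integer k ≥ 0, the following are equivalent: (1) f has codimension at most k; (2) there exist linearised polynomials M, L ∈ F_q[x] such that M has deg(M) distinct roots, all lying in F_q, with deg(M) ≥ p^{n−k}, deg(L) < deg(M), and f(x) = g(M(x)) + L(x) for all x ∈ F_q, where g ∈ F_q[x] has degree at most p^k − 1. -/
/-!
Let `U` be an `𝔽_p`-subspace of `𝔽_q` of dimension `m`. Evaluating the linearised polynomials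
`∑_{j<m} a_j X^{p^j}` on `U` gives every `𝔽_p`-linear map `U → 𝔽_q`: the evaluation is
injective because such a polynomial has degree `< p^m = |U|`, and both sides have `q^m` elements.
Matching `x ↦ x^{p^m}` on `U` by such an `S` makes `M = X^{p^m} - S` vanish on `U`, so its roots
are exactly `U`, all simple; matching `L|_U` gives a linearised `R` with `deg R < deg M` and
`L - R` vanishing on `U`. Then `f - R` is constant on the cosets of `U`, which are the fibres of
`M`, so `f - R = g ∘ M` with `g` interpolating on the image of `M`, a set of at most `p^k` points.
Conversely the roots of `M` lie in the kernel of the linear map `M`, which therefore has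
dimension at least `n - k`, and `g ∘ M` is constant on the cosets of any subspace of that kernel.
-/

open Polynomial

/-- A function `f : 𝔽_q → 𝔽_q` (with `q = p^n`) has codimension at most `k` if there are an
`𝔽_p`-linear map `L : 𝔽_q → 𝔽_q`, an `𝔽_p`-subspace `U` of dimension `n - k`, and a constant
`a_V` for each coset `V` of `U`, such that `f(x) = L(x) + a_{U+x}` for all `x`. -/
def HasCodimAtMost (p n : ℕ) {F : Type*} [Field F] [Fintype F] [Algebra (ZMod p) F]
    (f : F → F) (k : ℕ) : Prop :=
  ∃ (L : F →ₗ[ZMod p] F) (U : Submodule (ZMod p) F) (a : F ⧸ U → F),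
    Module.finrank (ZMod p) ↥U = n - k ∧
    ∀ x : F, f x = L x + a (Submodule.Quotient.mk x)

open Module

theorem Submodule.exists_le_finrank_eq {K V : Type*} [DivisionRing K] [AddCommGroup V]
    [Module K V] (W : Submodule K V) [FiniteDimensional K W] {r : ℕ} (hr : r ≤ finrank K W) :
    ∃ U ≤ W, finrank K U = r := by
  let b := finBasis K W
  let v : Fin r → V := fun i => b (Fin.castLE hr i)
  have hv : LinearIndependent K v :=
    (b.linearIndependent.comp _ (Fin.castLE_injective hr)).map' W.subtype W.ker_subtype
  exact ⟨span K (Set.range v), span_le.mpr (Set.range_subset_iff.mpr fun i => (b _).2),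
    by rw [finrank_span_eq_card hv, Fintype.card_fin]⟩

namespace Polynomial

theorem exists_eval_comp_eq_of_factorsThrough {α K : Type*} [Field K] [Finite α]
    {φ m : α → K} (h : φ.FactorsThrough m) :
    ∃ g : K[X], g.degree < Nat.card (Set.range m) ∧ ∀ x, φ x = g.eval (m x) := by
  classical
  let s := (Set.finite_range m).toFinset
  refine ⟨Lagrange.interpolate s id (Function.extend m φ 0), ?_, fun x => ?_⟩
  · rw [Nat.card_coe_set_eq, Set.ncard_eq_toFinset_card _ (Set.finite_range m)]
    exact Lagrange.degree_interpolate_lt _ (Set.injOn_id _)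
  · have hx : m x ∈ s := (Set.Finite.mem_toFinset _).mpr (Set.mem_range_self x)
    rw [← h.extend_apply 0 x]
    exact (Lagrange.eval_interpolate_at_node _ (Set.injOn_id _) hx).symm

def IsLinearised {R : Type*} [Semiring R] (p : ℕ) (P : R[X]) : Prop :=
  ∀ i, P.coeff i ≠ 0 → ∃ j, i = p ^ j

section Semiring

variable {R : Type*} {p : ℕ}

theorem IsLinearised.sub [Ring R] {P Q : R[X]} (hP : IsLinearised p P) (hQ : IsLinearised p Q) :
    IsLinearised p (P - Q) := by
  intro i hi
  rw [coeff_sub] at hi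
  by_cases hPi : P.coeff i = 0
  · exact hQ i (by simpa [hPi] using hi)
  · exact hP i hPi

variable [Semiring R]

theorem isLinearised_X_pow_pow (j : ℕ) : IsLinearised p (X ^ p ^ j : R[X]) := by
  intro i hi
  rw [coeff_X_pow] at hi
  exact ⟨j, by by_contra h; exact hi (if_neg h)⟩

theorem isLinearised_sum_C_mul_X_pow_pow {m : ℕ} (a : Fin m → R) :
    IsLinearised p (∑ j, C (a j) * X ^ p ^ (j : ℕ)) := by
  intro i hi
  rw [finsetSum_coeff] at hi
  obtain ⟨j, -, hj⟩ := Finset.exists_ne_zero_of_sum_ne_zero hi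
  rw [coeff_C_mul_X_pow] at hj
  exact ⟨j, by by_contra h; exact hj (if_neg h)⟩

theorem natDegree_sum_C_mul_X_pow_pow_lt {m : ℕ} (hp : 1 < p) (a : Fin m → R) :
    (∑ j, C (a j) * X ^ p ^ (j : ℕ)).natDegree < p ^ m := by
  have hpos : 0 < p ^ m := pow_pos (by omega) m
  refine (natDegree_sum_le_of_forall_le _ _ (n := p ^ m - 1) fun j _ => ?_).trans_lt (by omega)
  have := Nat.pow_lt_pow_right hp j.isLt
  exact (natDegree_C_mul_X_pow_le _ _).trans (by omega)

theorem coeff_sum_C_mul_X_pow_pow {m : ℕ} (hp : 1 < p) (a : Fin m → R) (j : Fin m) :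
    (∑ i, C (a i) * X ^ p ^ (i : ℕ)).coeff (p ^ (j : ℕ)) = a j := by
  rw [finsetSum_coeff, Finset.sum_eq_single j]
  · simp
  · intro i _ hij
    rw [coeff_C_mul_X_pow, if_neg fun h => hij (Fin.ext (Nat.pow_right_injective hp h).symm)]
  · simp

end Semiring

section CharP

variable {p : ℕ} [Fact p.Prime] {F : Type*} [Field F] [Algebra (ZMod p) F] {P : F[X]}

theorem IsLinearised.eval_add (hP : IsLinearised p P) (x y : F) :
    P.eval (x + y) = P.eval x + P.eval y := by
  have := charP_of_injective_algebraMap' (ZMod p) (A := F) p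
  simp only [eval_eq_sum, Polynomial.sum, ← Finset.sum_add_distrib]
  refine Finset.sum_congr rfl fun i hi => ?_
  obtain ⟨j, rfl⟩ := hP i (mem_support_iff.mp hi)
  rw [add_pow_char_pow, mul_add]

theorem IsLinearised.eval_smul (hP : IsLinearised p P) (c : ZMod p) (x : F) :
    P.eval (c • x) = c • P.eval x := by
  simp only [eval_eq_sum, Polynomial.sum, Finset.smul_sum]
  refine Finset.sum_congr rfl fun i hi => ?_
  obtain ⟨j, rfl⟩ := hP i (mem_support_iff.mp hi)
  rw [_root_.smul_pow, ZMod.pow_card_pow, mul_smul_comm]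

@[simps]
noncomputable def IsLinearised.toLinearMap (hP : IsLinearised p P) : F →ₗ[ZMod p] F where
  toFun x := P.eval x
  map_add' := hP.eval_add
  map_smul' := hP.eval_smul

end CharP

section Finite

variable {p : ℕ} [hp : Fact p.Prime] {F : Type*} [Field F] [Algebra (ZMod p) F] [Finite F]

theorem exists_isLinearised_eqOn (U : Submodule (ZMod p) F) (ℓ : U →ₗ[ZMod p] F) :
    ∃ R : F[X], IsLinearised p R ∧ R.natDegree < p ^ finrank (ZMod p) U ∧
      ∀ u : U, R.eval (u : F) = ℓ u := by
  set m := finrank (ZMod p) U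
  have := Fintype.ofFinite U
  let Φ : (Fin m → F) → (U →ₗ[ZMod p] F) := fun a =>
    (isLinearised_sum_C_mul_X_pow_pow a).toLinearMap.domRestrict U
  have hcardU : Fintype.card U = p ^ m := by
    rw [Fintype.card_eq_nat_card, natCard_eq_pow_finrank (K := ZMod p), Nat.card_zmod]
  have hΦ : Function.Injective Φ := by
    intro a b hab
    have hPab := eq_of_natDegree_lt_card_of_eval_eq _ _ Subtype.val_injective
      (fun u => LinearMap.congr_fun hab u)
      (hcardU ▸ max_lt (natDegree_sum_C_mul_X_pow_pow_lt hp.out.one_lt a)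
        (natDegree_sum_C_mul_X_pow_pow_lt hp.out.one_lt b))
    funext j
    rw [← coeff_sum_C_mul_X_pow_pow hp.out.one_lt a j, hPab,
      coeff_sum_C_mul_X_pow_pow hp.out.one_lt]
  let e : (Fin m → F) ≃ (U →ₗ[ZMod p] F) := ((finBasis (ZMod p) U).constr ℕ).toEquiv
  have := Finite.of_equiv _ e
  obtain ⟨a, ha⟩ := (hΦ.bijective_of_nat_card_le (Nat.card_congr e).ge).surjective ℓ
  exact ⟨_, isLinearised_sum_C_mul_X_pow_pow a, natDegree_sum_C_mul_X_pow_pow_lt hp.out.one_lt a,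
    fun u => LinearMap.congr_fun ha u⟩

variable [DecidableEq F]

theorem exists_isLinearised_ker_eq (U : Submodule (ZMod p) F) :
    ∃ (M : F[X]) (hM : IsLinearised p M), M.natDegree = p ^ finrank (ZMod p) U ∧
      M.roots.toFinset.card = M.natDegree ∧ LinearMap.ker hM.toLinearMap = U := by
  set m := finrank (ZMod p) U
  obtain ⟨R, hR, hRdeg, hRU⟩ :=
    exists_isLinearised_eqOn U ((isLinearised_X_pow_pow (p := p) m).toLinearMap.domRestrict U)
  set M : F[X] := X ^ p ^ m - R
  have hMdeg : M.natDegree = p ^ m := by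
    rw [natDegree_sub_eq_left_of_natDegree_lt (by rwa [natDegree_X_pow]), natDegree_X_pow]
  have hM0 : M ≠ 0 := fun h => by
    have := pow_pos hp.out.pos m
    rw [h, natDegree_zero] at hMdeg
    omega
  have hUroots : (U : Set F) ⊆ M.roots.toFinset := fun u hu => by
    simpa [mem_roots hM0, M, sub_eq_zero] using (hRU ⟨u, hu⟩).symm
  have hcardU : (U : Set F).ncard = p ^ m := by
    rw [← Nat.card_coe_set_eq, SetLike.coe_sort_coe, natCard_eq_pow_finrank (K := ZMod p),
      Nat.card_zmod]
  have hroots : (M.roots.toFinset : Set F) = U := by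
    refine (Set.eq_of_subset_of_ncard_le hUroots ?_ (Finset.finite_toSet _)).symm
    rw [Set.ncard_coe_finset, hcardU, ← hMdeg]
    exact (Multiset.toFinset_card_le _).trans (card_roots' M)
  refine ⟨M, (isLinearised_X_pow_pow m).sub hR, hMdeg, ?_, ?_⟩
  · rw [← Set.ncard_coe_finset, hroots, hcardU, hMdeg]
  · ext x
    rw [LinearMap.mem_ker, ← SetLike.mem_coe, ← hroots]
    simp [mem_roots hM0]

theorem IsLinearised.card_roots_toFinset_le {M : F[X]} (hM : IsLinearised p M) :
    M.roots.toFinset.card ≤ Nat.card (LinearMap.ker hM.toLinearMap) := by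
  rw [← Set.ncard_coe_finset, ← SetLike.coe_sort_coe, Nat.card_coe_set_eq]
  refine Set.ncard_le_ncard (fun x hx => ?_) (Set.toFinite _)
  simpa using (mem_roots'.mp (Multiset.mem_toFinset.mp hx)).2

end Finite

end Polynomial

section Codimension

variable {p n k : ℕ} [hp : Fact p.Prime] {F : Type*} [Field F] [Fintype F] [Algebra (ZMod p) F]
  {f : F → F}

theorem HasCodimAtMost.exists_eq_eval_comp_add [DecidableEq F] (hF : finrank (ZMod p) F = n)
    (h : HasCodimAtMost p n f k) :
    ∃ M L g : F[X], IsLinearised p M ∧ IsLinearised p L ∧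
      M.roots.toFinset.card = M.natDegree ∧ p ^ (n - k) ≤ M.natDegree ∧ L.degree < M.degree ∧ g.natDegree ≤ p ^ k - 1 ∧
      ∀ x : F, f x = g.eval (M.eval x) + L.eval x := by
  obtain ⟨L, U, a, hU, hf⟩ := h
  obtain ⟨M, hM, hMdeg, hMroots, hMker⟩ := exists_isLinearised_ker_eq U
  obtain ⟨R, hR, hRdeg, hRU⟩ := exists_isLinearised_eqOn U (L.domRestrict U)
  have hfactor : (fun x => f x - R.eval x).FactorsThrough hM.toLinearMap := by
    intro x y hxy
    have hxyU : x - y ∈ U := hMker ▸ LinearMap.sub_mem_ker_iff.mpr hxy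
    have hLR : L (x - y) = R.eval (x - y) := (hRU ⟨_, hxyU⟩).symm
    rw [map_sub, ← hR.toLinearMap_apply, map_sub] at hLR
    simp only [hf, (Submodule.Quotient.eq U).mpr hxyU, hR.toLinearMap_apply] at hLR ⊢
    linear_combination hLR
  obtain ⟨g, hgdeg, hg⟩ := exists_eval_comp_eq_of_factorsThrough hfactor
  have hrange : Nat.card (Set.range hM.toLinearMap) ≤ p ^ k := by
    have hrank := LinearMap.finrank_range_add_finrank_ker hM.toLinearMap
    rw [hMker, hU, hF] at hrank
    rw [← LinearMap.coe_range, SetLike.coe_sort_coe, natCard_eq_pow_finrank (K := ZMod p),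
      Nat.card_zmod]
    exact Nat.pow_le_pow_right hp.out.pos (by omega)
  refine ⟨M, R, g, hM, hR, hMroots, (hMdeg.trans (by rw [hU])).ge,
    degree_lt_degree (hMdeg ▸ hU ▸ hRdeg), ?_, fun x => ?_⟩
  · rcases eq_or_ne g 0 with rfl | hg0
    · simp
    · have := (natDegree_lt_iff_degree_lt hg0).mpr (hgdeg.trans_le (by exact_mod_cast hrange))
      omega
  · have := hg x
    simp only [IsLinearised.toLinearMap_apply] at this
    linear_combination this

theorem hasCodimAtMost_of_eq_eval_comp_add [DecidableEq F] {M L g : F[X]} (hM : IsLinearised p M)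
    (hL : IsLinearised p L) (hroots : M.roots.toFinset.card = M.natDegree)
    (hdeg : p ^ (n - k) ≤ M.natDegree) (hf : ∀ x : F, f x = g.eval (M.eval x) + L.eval x) :
    HasCodimAtMost p n f k := by
  have hker : n - k ≤ finrank (ZMod p) (LinearMap.ker hM.toLinearMap) := by
    have hcard := natCard_eq_pow_finrank (K := ZMod p) (V := LinearMap.ker hM.toLinearMap)
    rw [Nat.card_zmod] at hcard
    rw [← Nat.pow_le_pow_iff_right hp.out.one_lt, ← hcard]
    exact hdeg.trans (hroots ▸ hM.card_roots_toFinset_le)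
  obtain ⟨U, hUker, hU⟩ := Submodule.exists_le_finrank_eq _ hker
  refine ⟨hL.toLinearMap, U, fun v => g.eval (U.liftQ hM.toLinearMap hUker v), hU, fun x => ?_⟩
  simp [hf x, add_comm]

end Codimension

theorem stmt2_general (p n : ℕ) [Fact p.Prime] {F : Type*} [Field F] [Fintype F]
    [Algebra (ZMod p) F] [DecidableEq F] (hcard : Fintype.card F = p ^ n)
    (f : F → F) (k : ℕ) :
    HasCodimAtMost p n f k ↔
      ∃ M L g : F[X],
        (∀ i : ℕ, M.coeff i ≠ 0 → ∃ j : ℕ, i = p ^ j) ∧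
        (∀ i : ℕ, L.coeff i ≠ 0 → ∃ j : ℕ, i = p ^ j) ∧
        M.roots.toFinset.card = M.natDegree ∧
        p ^ (n - k) ≤ M.natDegree ∧
        L.degree < M.degree ∧
        g.natDegree ≤ p ^ k - 1 ∧
        ∀ x : F, f x = g.eval (M.eval x) + L.eval x := by
  have hF : finrank (ZMod p) F = n := by
    rw [card_eq_pow_finrank (K := ZMod p), ZMod.card] at hcard
    exact Nat.pow_right_injective (Fact.out : p.Prime).two_le hcard
  refine ⟨HasCodimAtMost.exists_eq_eval_comp_add hF, ?_⟩
  rintro ⟨M, L, g, hM, hL, hroots, hdeg, -, -, hf⟩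
  exact hasCodimAtMost_of_eq_eval_comp_add hM hL hroots hdeg hf

/-- `f` has codimension at most `k` iff there exist linearised polynomials
`M, L ∈ 𝔽_q[x]` such that `M` has `deg M` distinct roots, all lying in `𝔽_q`, with
`deg M ≥ p^(n-k)`, `deg L < deg M`, and `f(x) = g(M(x)) + L(x)` for all `x ∈ 𝔽_q`, where
`g ∈ 𝔽_q[x]` has degree at most `p^k - 1`. -/
theorem stmt2 (p n : ℕ) [Fact p.Prime] (hn : 1 ≤ n) {F : Type*} [Field F] [Fintype F]
    [Algebra (ZMod p) F] [DecidableEq F] (hcard : Fintype.card F = p ^ n)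
    (f : F → F) (k : ℕ) :
    HasCodimAtMost p n f k ↔
      ∃ M L g : F[X],
        (∀ i : ℕ, M.coeff i ≠ 0 → ∃ j : ℕ, i = p ^ j) ∧
        (∀ i : ℕ, L.coeff i ≠ 0 → ∃ j : ℕ, i = p ^ j) ∧
        M.roots.toFinset.card = M.natDegree ∧
        p ^ (n - k) ≤ M.natDegree ∧
        L.degree < M.degree ∧
        g.natDegree ≤ p ^ k - 1 ∧
        ∀ x : F, f x = g.eval (M.eval x) + L.eval x :=
  stmt2_general p n hcard f k
end

section
/- Let f, g, h be functions from F_q to F_q with f = g ∘ h. Then codim(f) ≤ codim(g) + codim(h); equivalently, the additive index of f is at most the product of the additive indices of g and h. -/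
open Polynomial

open Module

/-- The codimension `codim f` is the smallest `k` such that `f` has codimension at most `k`. -/
noncomputable def codim (p n : ℕ) {F : Type*} [Field F] [Fintype F] [Algebra (ZMod p) F]
    (f : F → F) : ℕ :=
  sInf {k | HasCodimAtMost p n f k}

/-- The additive index of `f` is `AddInd f = p ^ codim f`. -/
noncomputable def addInd (p n : ℕ) {F : Type*} [Field F] [Fintype F] [Algebra (ZMod p) F]
    (f : F → F) : ℕ :=
  p ^ codim p n f


section Aux

variable {p : ℕ} [Fact p.Prime] {F : Type*} [Field F] [Fintype F] [Algebra (ZMod p) F]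

lemma aux_shrink (U : Submodule (ZMod p) F) (d : ℕ) (hd : d ≤ finrank (ZMod p) U) :
    ∃ U' : Submodule (ZMod p) F, U' ≤ U ∧ finrank (ZMod p) U' = d := by
  set m := finrank (ZMod p) ↥U
  let b : Basis (Fin m) (ZMod p) U := finBasis (ZMod p) U
  let v : Fin d → F := fun i => (b (Fin.castLE hd i) : F)
  have hli : LinearIndependent (ZMod p) v := by
    have h1 : LinearIndependent (ZMod p) fun i : Fin m => ((b i : U) : F) :=
      b.linearIndependent.map' U.subtype U.ker_subtype
    exact h1.comp (Fin.castLE hd) (Fin.castLE_injective hd)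
  refine ⟨Submodule.span (ZMod p) (Set.range v), ?_, ?_⟩
  · rw [Submodule.span_le]
    rintro _ ⟨i, rfl⟩
    exact (b (Fin.castLE hd i)).2
  · rw [finrank_span_eq_card hli, Fintype.card_fin]

/-- If `f - L` is constant on cosets of a subspace of dimension `≥ n - k`,
then `f` has codimension at most `k`. -/
lemma hasCodimAtMost_of (n k : ℕ) (f : F → F) (L : F →ₗ[ZMod p] F)
    (U : Submodule (ZMod p) F) (hd : n - k ≤ finrank (ZMod p) U)
    (hf : ∀ x y : F, x - y ∈ U → f x - L x = f y - L y) :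
    HasCodimAtMost p n f k := by
  obtain ⟨U', hle, hrank⟩ := aux_shrink U (n - k) hd
  refine ⟨L, U', fun q => f q.out - L q.out, hrank, fun x => ?_⟩
  have hmk : (Submodule.Quotient.mk (Submodule.Quotient.mk x : F ⧸ U').out : F ⧸ U')
      = Submodule.Quotient.mk x := Quotient.out_eq _
  have hmem : x - (Submodule.Quotient.mk x : F ⧸ U').out ∈ U :=
    hle ((Submodule.Quotient.eq U').1 hmk.symm)
  have hkey := hf x _ hmem
  linear_combination hkey

lemma hasCodimAtMost_top (n : ℕ) (f : F → F) : HasCodimAtMost p n f n := by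
  refine hasCodimAtMost_of n n f 0 ⊥ (by simp) ?_
  intro x y hxy
  rw [Submodule.mem_bot, sub_eq_zero] at hxy
  rw [hxy]

lemma codim_mem (n : ℕ) (f : F → F) : HasCodimAtMost p n f (codim p n f) := by
  have : {k | HasCodimAtMost p n f k}.Nonempty := ⟨n, hasCodimAtMost_top n f⟩
  exact Nat.sInf_mem this

end Aux

/-- If `f = g ∘ h` then `codim f ≤ codim g + codim h`; equivalently the
additive index of `f` is at most the product of the additive indices of `g` and `h`. -/
theorem stmt3 (p n : ℕ) [Fact p.Prime] (hn : 1 ≤ n) {F : Type*} [Field F] [Fintype F]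
    [Algebra (ZMod p) F] (hcard : Fintype.card F = p ^ n)
    (f g h : F → F) (hfgh : f = g ∘ h) :
    codim p n f ≤ codim p n g + codim p n h := by
  obtain ⟨Lg, Ug, ag, hUg, hg⟩ := codim_mem (p := p) n g
  obtain ⟨Lh, Uh, ah, hUh, hh⟩ := codim_mem (p := p) n h
  set kg := codim p n g
  set kh := codim p n h
  have hFrank : finrank (ZMod p) F = n := by
    have := card_eq_pow_finrank (K := ZMod p) (V := F)
    rw [ZMod.card, hcard] at this
    exact (Nat.pow_right_injective (Fact.out : p.Prime).two_le this.symm)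
  set W : Submodule (ZMod p) F := Ug.comap Lh
  -- finrank Ug ≤ finrank W via injectivity of the induced quotient map
  have hWle : finrank (ZMod p) Ug ≤ finrank (ZMod p) W := by
    have hc : W ≤ Ug.comap Lh := le_refl _
    have hinj : Function.Injective (Submodule.mapQ W Ug Lh hc) := by
      intro a b hab
      induction a using Submodule.Quotient.induction_on with | H x =>
      induction b using Submodule.Quotient.induction_on with | H y =>
      rw [Submodule.mapQ_apply, Submodule.mapQ_apply, Submodule.Quotient.eq, ← map_sub] at hab
      exact (Submodule.Quotient.eq W).2 hab
    have hq : finrank (ZMod p) (F ⧸ W) ≤ finrank (ZMod p) (F ⧸ Ug) :=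
      LinearMap.finrank_le_finrank_of_injective hinj
    have h1 := Submodule.finrank_quotient_add_finrank W
    have h2 := Submodule.finrank_quotient_add_finrank Ug
    omega
  have hinf : n - (kg + kh) ≤ finrank (ZMod p) ↥(Uh ⊓ W) := by
    have h3 := Submodule.finrank_sup_add_finrank_inf_eq Uh W
    have h4 : finrank (ZMod p) ↥(Uh ⊔ W) ≤ n := hFrank ▸ Submodule.finrank_le _
    omega
  refine Nat.sInf_le (hasCodimAtMost_of n (kg + kh) f (Lg ∘ₗ Lh) (Uh ⊓ W) hinf ?_)
  intro x y hxy
  obtain ⟨hxy1, hxy2⟩ := hxy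
  have hmkh : (Submodule.Quotient.mk x : F ⧸ Uh) = Submodule.Quotient.mk y :=
    (Submodule.Quotient.eq Uh).2 hxy1
  have hhd : h x - h y = Lh x - Lh y := by
    rw [hh x, hh y, hmkh]; ring
  have hmkg : (Submodule.Quotient.mk (h x) : F ⧸ Ug) = Submodule.Quotient.mk (h y) := by
    rw [Submodule.Quotient.eq]
    rw [hhd, ← map_sub]
    exact hxy2
  have hfx : f x = Lg (Lh x) + (Lg (ah (Submodule.Quotient.mk x))
      + ag (Submodule.Quotient.mk (h x))) := by
    rw [hfgh]
    simp only [Function.comp_apply]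
    rw [hg (h x)]
    nth_rewrite 1 [hh x]
    rw [map_add]
    ring
  have hfy : f y = Lg (Lh y) + (Lg (ah (Submodule.Quotient.mk y))
      + ag (Submodule.Quotient.mk (h y))) := by
    rw [hfgh]
    simp only [Function.comp_apply]
    rw [hg (h y)]
    nth_rewrite 1 [hh y]
    rw [map_add]
    ring
  simp only [LinearMap.coe_comp, Function.comp_apply]
  rw [hfx, hfy, hmkh, hmkg]
  ring
end

section
/- Suppose p > 3. Then the inversion f : F_q → F_q, f(x) = x^{q−2} (so f(0) = 0 and f(x) = x^{−1} for x ≠ 0), has additive index q, i.e., codim(f) = n. -/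
open Polynomial

lemma inv_pow_card_sub_two {F : Type*} [Field F] [Fintype F] (hq : 3 ≤ Fintype.card F)
    (x : F) : x ^ (Fintype.card F - 2) = x⁻¹ := by
  rcases eq_or_ne x 0 with rfl | hx
  · rw [inv_zero, zero_pow]
    omega
  · have h1 : x ^ (Fintype.card F - 1) = 1 := FiniteField.pow_card_sub_one_eq_one x hx
    have h2 : Fintype.card F - 1 = (Fintype.card F - 2) + 1 := by omega
    rw [h2, pow_succ] at h1
    exact eq_inv_of_mul_eq_one_left h1

/-- If `p > 3`, the inversion `f(x) = x^(q-2)` on `𝔽_q` has additive index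
`q`, i.e. `codim f = n`. -/
theorem stmt5 (p n : ℕ) [Fact p.Prime] (hp : 3 < p) (hn : 1 ≤ n) {F : Type*} [Field F]
    [Fintype F] [Algebra (ZMod p) F] (hcard : Fintype.card F = p ^ n) :
    codim p n (fun x : F => x ^ (Fintype.card F - 2)) = n := by
  classical
  have hp5 : 5 ≤ p := by
    have hpr := (Fact.out : p.Prime)
    by_contra h
    push_neg at h
    have h4 : p = 4 := by omega
    rw [h4] at hpr
    norm_num at hpr
  have hq5 : 5 ≤ Fintype.card F := by
    rw [hcard]
    calc 5 ≤ p := hp5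
    _ = p ^ 1 := (pow_one p).symm
    _ ≤ p ^ n := Nat.pow_le_pow_right (by omega) hn
  set f : F → F := fun x : F => x ^ (Fintype.card F - 2) with hf
  have hfinv : ∀ x : F, f x = x⁻¹ := fun x => inv_pow_card_sub_two (by omega) x
  -- membership of n
  have hmem : n ∈ {k | HasCodimAtMost p n f k} := by
    refine ⟨0, ⊥, f ∘ (Submodule.quotEquivOfEqBot (⊥ : Submodule (ZMod p) F) rfl), ?_, ?_⟩
    · simp
    · intro x
      simp [Submodule.quotEquivOfEqBot]
  apply le_antisymm
  · exact Nat.sInf_le hmem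
  · apply le_csInf ⟨n, hmem⟩
    rintro k ⟨L, U, a, hU, hfa⟩
    by_contra hk
    push_neg at hk
    -- U is nontrivial
    have hUne : U ≠ ⊥ := by
      intro h
      rw [h] at hU
      simp at hU
      omega
    obtain ⟨u, huU, hu0⟩ := Submodule.exists_mem_ne_zero_of_ne_bot hUne
    -- f(x+u) - f(x) = L u for all x
    have key : ∀ x : F, f (x + u) - f x = L u := by
      intro x
      have h1 := hfa x
      have h2 := hfa (x + u)
      have hmk : (Submodule.Quotient.mk (x + u) : F ⧸ U) = Submodule.Quotient.mk x := by
        rw [Submodule.Quotient.eq]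
        simpa using huU
      rw [hmk] at h2
      rw [h1, h2]
      rw [show x + u = x + u from rfl, map_add]
      ring
    have hLu : L u = u⁻¹ := by
      have := key 0
      rw [hfinv, hfinv, zero_add, inv_zero, sub_zero] at this
      exact this.symm
    -- for x ≠ 0, x ≠ -u : x² + ux + u² = 0
    have quad : ∀ x : F, x ≠ 0 → x + u ≠ 0 → x ^ 2 + u * x + u ^ 2 = 0 := by
      intro x hx hxu
      have h := key x
      rw [hfinv, hfinv, hLu] at h
      field_simp at h
      linear_combination -h
    -- the set {x | x ≠ 0, x + u ≠ 0} has ≥ 3 elements but is contained in a 2-element set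
    set S : Finset F := Finset.univ \ {0, -u} with hS
    have hScard : 3 ≤ S.card := by
      have h1 : ({0, -u} : Finset F).card ≤ 2 := Finset.card_insert_le _ _ |>.trans (by simp)
      have := Finset.le_card_sdiff ({0, -u} : Finset F) Finset.univ
      have h2 : S.card ≥ Finset.univ.card - ({0, -u} : Finset F).card :=
        Finset.le_card_sdiff _ _
      have h3 : (Finset.univ : Finset F).card = Fintype.card F := rfl
      omega
    have hSne : S.Nonempty := Finset.card_pos.mp (by omega)
    obtain ⟨x₀, hx₀⟩ := hSne
    have hx₀mem : x₀ ≠ 0 ∧ x₀ ≠ -u := by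
      simp [hS] at hx₀
      tauto
    have hsub : S ⊆ {x₀, -u - x₀} := by
      intro y hy
      have hymem : y ≠ 0 ∧ y ≠ -u := by
        simp [hS] at hy
        tauto
      have hq1 := quad x₀ hx₀mem.1 (by intro h; exact hx₀mem.2 (by linear_combination h))
      have hq2 := quad y hymem.1 (by intro h; exact hymem.2 (by linear_combination h))
      have : (y - x₀) * (y + x₀ + u) = 0 := by linear_combination hq2 - hq1
      rcases mul_eq_zero.mp this with h | h
      · simp [sub_eq_zero.mp h]
      · have : y = -u - x₀ := by linear_combination h
        simp [this]
    have : S.card ≤ 2 := (Finset.card_le_card hsub).trans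
      ((Finset.card_insert_le _ _).trans (by simp))
    omega
end

section
/- The inversion f : F_q → F_q, f(x) = x^{q−2}, has additive index q whenever q > 4, and additive index 1 when q ∈ {2, 3, 4}. -/
open Polynomial

/-!
If `f` has codimension `k < n`, the subspace `U` is nonzero and for `u ∈ U` the derivative
`x ↦ f (x + u) - f x` equals the constant `L u`: every `u ∈ U` is a linear structure of `f`.
For the inversion, `(x + u)⁻¹ - x⁻¹ = u⁻¹` (the value at `x = 0`) forces
`x ^ 2 + u x + u ^ 2 = 0` for all `x ∉ {0, -u}`, so a field with at least five elements would
give a quadratic with three roots. Hence the inversion has codimension `n` once `q > 4`.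
For `q ≤ 4` the map `x ↦ x ^ (q - 2)` is `1`, `x` or the Frobenius `x ↦ x ^ 2`, i.e. affine.
-/

def IsLinearStructure {G M : Type*} [Add G] [Sub M] (f : G → M) (u : G) : Prop :=
  ∃ c, ∀ x, f (x + u) - f x = c

section Codim

variable {p n : ℕ} {F : Type*} [Field F] [Fintype F] [Algebra (ZMod p) F]

theorem finrank_zmod_eq_of_card_eq [Fact p.Prime] (hcard : Fintype.card F = p ^ n) :
    Module.finrank (ZMod p) F = n := by
  have h := Module.card_eq_pow_finrank (K := ZMod p) (V := F)
  rw [ZMod.card, hcard] at h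
  exact Nat.pow_right_injective (Fact.out : p.Prime).two_le h.symm

theorem hasCodimAtMost_self (f : F → F) : HasCodimAtMost p n f n := by
  have := (algebraMap (ZMod p) F).domain_nontrivial
  exact ⟨0, ⊥, f ∘ Submodule.quotEquivOfEqBot ⊥ rfl, by simp, fun x => by simp⟩

theorem hasCodimAtMost_zero_addMonoidHom_add_const (hF : Module.finrank (ZMod p) F = n)
    (g : F →+ F) (c : F) : HasCodimAtMost p n (fun x => g x + c) 0 :=
  ⟨g.toZModLinearMap p, ⊤, fun _ => c, by rw [finrank_top, hF, Nat.sub_zero], fun _ => rfl⟩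

theorem HasCodimAtMost.exists_isLinearStructure {f : F → F} {k : ℕ}
    (hf : HasCodimAtMost p n f k) (hk : k < n) : ∃ u ≠ 0, IsLinearStructure f u := by
  obtain ⟨L, U, a, hU, hfLa⟩ := hf
  have := (algebraMap (ZMod p) F).domain_nontrivial
  have : Nontrivial U := Module.nontrivial_of_finrank_pos (R := ZMod p) (by omega)
  obtain ⟨⟨u, huU⟩, hu⟩ := exists_ne (0 : U)
  refine ⟨u, fun h => hu (Subtype.ext h), L u, fun x => ?_⟩
  have hcoset : (Submodule.Quotient.mk (x + u) : F ⧸ U) = Submodule.Quotient.mk x := by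
    rw [Submodule.Quotient.eq, add_sub_cancel_left]
    exact huU
  rw [hfLa, hfLa x, hcoset, map_add]
  ring

theorem codim_eq_zero {f : F → F} (hf : HasCodimAtMost p n f 0) : codim p n f = 0 :=
  Nat.sInf_eq_zero.mpr (Or.inl hf)

theorem codim_eq_self_of_forall_not_isLinearStructure {f : F → F}
    (hf : ∀ u ≠ 0, ¬ IsLinearStructure f u) : codim p n f = n := by
  refine le_antisymm (Nat.sInf_le (hasCodimAtMost_self f)) (le_csInf ⟨n, hasCodimAtMost_self f⟩ ?_)
  intro k hk
  by_contra! hkn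
  obtain ⟨u, hu, hlin⟩ := HasCodimAtMost.exists_isLinearStructure hk hkn
  exact hf u hu hlin

end Codim

theorem eq_of_quadratic_roots {R : Type*} [CommRing R] [NoZeroDivisors R] {s t a b d : R}
    (ha : a * a + s * a + t = 0) (hb : b * b + s * b + t = 0) (hd : d * d + s * d + t = 0)
    (hab : a ≠ b) (had : a ≠ d) : b = d := by
  have hb' : a + b + s = 0 :=
    (mul_eq_zero.mp (by linear_combination ha - hb : (a - b) * (a + b + s) = 0)).resolve_left
      (sub_ne_zero.mpr hab)
  have hd' : a + d + s = 0 :=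
    (mul_eq_zero.mp (by linear_combination ha - hd : (a - d) * (a + d + s) = 0)).resolve_left
      (sub_ne_zero.mpr had)
  linear_combination hb' - hd'

theorem not_isLinearStructure_inv {F : Type*} [Field F] [Fintype F]
    (hF : 4 < Fintype.card F) {u : F} (hu : u ≠ 0) : ¬ IsLinearStructure (·⁻¹) u := by
  classical
  rintro ⟨c, hc⟩
  have hcu : c = u⁻¹ := by simpa using (hc 0).symm
  subst hcu
  have quadratic : ∀ x ∈ Finset.univ \ {0, -u}, x * x + u * x + u * u = 0 := by
    intro x hx
    simp only [Finset.mem_sdiff, Finset.mem_univ, Finset.mem_insert, Finset.mem_singleton,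
      not_or, true_and] at hx
    have hxu : x + u ≠ 0 := fun h => hx.2 (eq_neg_of_add_eq_zero_left h)
    have := hc x
    field_simp [hx.1, hxu] at this
    linear_combination -this
  have hcard : 2 < (Finset.univ \ {0, -u} : Finset F).card := by
    rw [Finset.card_sdiff_of_subset (Finset.subset_univ _), Finset.card_univ]
    have := Finset.card_le_two (a := (0 : F)) (b := -u)
    omega
  obtain ⟨a, ha, b, hb, d, hd, hab, had, hbd⟩ := Finset.two_lt_card.mp hcard
  exact hbd (eq_of_quadratic_roots (quadratic a ha) (quadratic b hb) (quadratic d hd) hab had)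

theorem pow_card_sub_two_eq_inv {F : Type*} [Field F] [Fintype F] (hF : 2 < Fintype.card F)
    (x : F) : x ^ (Fintype.card F - 2) = x⁻¹ := by
  rcases eq_or_ne x 0 with rfl | hx
  · rw [zero_pow (by omega), inv_zero]
  · rw [show Fintype.card F - 2 = Fintype.card F - 1 - 1 by omega, pow_sub₀ x hx (by omega),
      FiniteField.pow_card_sub_one_eq_one x hx, pow_one, one_mul]

theorem charP_two_of_card_eq_four {F : Type*} [Field F] [Fintype F]
    (h : Fintype.card F = 4) : CharP F 2 := by
  obtain ⟨k, hchar, hk⟩ := FiniteField.card F (ringChar F)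
  rw [h, show 4 = 2 ^ 2 by rfl] at hk
  exact ringChar.eq_iff.mp (hchar.pow_inj' Nat.prime_two k.ne_zero two_ne_zero hk.symm).1

theorem hasCodimAtMost_zero_pow_card_sub_two {p n : ℕ} [Fact p.Prime] {F : Type*} [Field F]
    [Fintype F] [Algebra (ZMod p) F] (hcard : Fintype.card F = p ^ n)
    (hsmall : Fintype.card F = 2 ∨ Fintype.card F = 3 ∨ Fintype.card F = 4) :
    HasCodimAtMost p n (fun x : F => x ^ (Fintype.card F - 2)) 0 := by
  have hF := finrank_zmod_eq_of_card_eq hcard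
  rcases hsmall with h | h | h <;> simp only [h]
  · simpa using hasCodimAtMost_zero_addMonoidHom_add_const hF 0 1
  · simpa using hasCodimAtMost_zero_addMonoidHom_add_const hF (AddMonoidHom.id F) 0
  · have := charP_two_of_card_eq_four h
    simpa [frobenius_def] using
      hasCodimAtMost_zero_addMonoidHom_add_const hF (frobenius F 2).toAddMonoidHom 0

theorem stmt6_general (p n : ℕ) [Fact p.Prime] {F : Type*} [Field F]
    [Fintype F] [Algebra (ZMod p) F] (hcard : Fintype.card F = p ^ n) :
    (4 < Fintype.card F →
      addInd p n (fun x : F => x ^ (Fintype.card F - 2)) = Fintype.card F) ∧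
    ((Fintype.card F = 2 ∨ Fintype.card F = 3 ∨ Fintype.card F = 4) →
      addInd p n (fun x : F => x ^ (Fintype.card F - 2)) = 1) := by
  refine ⟨fun hlarge => ?_, fun hsmall => ?_⟩
  · have hinv : (fun x : F => x ^ (Fintype.card F - 2)) = (·⁻¹) :=
      funext (pow_card_sub_two_eq_inv (by omega))
    rw [addInd, hinv, codim_eq_self_of_forall_not_isLinearStructure
      fun u hu => not_isLinearStructure_inv hlarge hu, hcard]
  · rw [addInd, codim_eq_zero (hasCodimAtMost_zero_pow_card_sub_two hcard hsmall), pow_zero]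

/-- The inversion `f(x) = x^(q-2)` on `𝔽_q` has additive index `q` whenever
`q > 4`, and additive index `1` when `q ∈ {2, 3, 4}`. -/
theorem stmt6 (p n : ℕ) [Fact p.Prime] (hn : 1 ≤ n) {F : Type*} [Field F]
    [Fintype F] [Algebra (ZMod p) F] (hcard : Fintype.card F = p ^ n) :
    (4 < Fintype.card F →
      addInd p n (fun x : F => x ^ (Fintype.card F - 2)) = Fintype.card F) ∧
    ((Fintype.card F = 2 ∨ Fintype.card F = 3 ∨ Fintype.card F = 4) →
      addInd p n (fun x : F => x ^ (Fintype.card F - 2)) = 1) :=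
  stmt6_general p n hcard
end

section
/- Let f be a permutation of F_q of Carlitz rank r with r ≥ 1 and deg(f) > 1 (equivalently, f is not F_q-affine). Then AddInd(f) ≥ min{q/r, (q − 2r)/2}. -/
open Polynomial

/-- The Carlitz expression `P_m(a_0, …, a_{m+1}; x)`: `carlitzIter 0 a x = a 0 * x + a 1`, and
`carlitzIter (m+1) a x = (carlitzIter m a x)^(q-2) + a (m+2)`. -/
def carlitzIter {F : Type*} [Field F] [Fintype F] : ℕ → (ℕ → F) → F → F
  | 0, a, x => a 0 * x + a 1
  | (m + 1), a, x => (carlitzIter m a x) ^ (Fintype.card F - 2) + a (m + 2)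

/-- `f` has Carlitz rank at most `m`: it can be represented as
`f(x) = (⋯((a_0 x + a_1)^(q-2) + a_2)^(q-2) + ⋯ + a_m)^(q-2) + a_{m+1}` with
`a_0, a_2, …, a_m ≠ 0`. -/
def HasCrkAtMost {F : Type*} [Field F] [Fintype F] (f : F → F) (m : ℕ) : Prop :=
  ∃ a : ℕ → F, a 0 ≠ 0 ∧ (∀ i, 2 ≤ i → i ≤ m → a i ≠ 0) ∧ ∀ x, f x = carlitzIter m a x

/-- The Carlitz rank of `f` is the smallest `m` admitting such a representation. -/
noncomputable def crk {F : Type*} [Field F] [Fintype F] (f : F → F) : ℕ :=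
  sInf {m | HasCrkAtMost f m}

/-- The unique polynomial of degree at most `q - 1` interpolating `f` on `𝔽_q`;
`deg f` and the weight `w(f)` are its degree and its number of nonzero coefficients. -/
noncomputable def interp {F : Type*} [Field F] [Fintype F] [DecidableEq F] (f : F → F) : Polynomial F :=
  Lagrange.interpolate Finset.univ id f

/-!
A Carlitz expression of rank `r` is a Möbius transformation `x ↦ (αx + β) / (γx + δ)` away from at
most `r` points: each inversion can only misbehave at the zero of the current denominator.
Write `f = L + a` with `L` additive and `a` constant on the cosets of a subspace `U` with `s`
elements. If `AddInd f = q / s` were below both bounds, some coset of `U` would contain more than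
`(s + 2) / 2` points at which `f` is Möbius. If `γ ≠ 0`, comparing `f` at two such points `x` and
`x - d` gives `L d · (γx + δ)(γ(x - d) + δ) = (αδ - βγ) d`, a nontrivial quadratic condition on `x`;
so each nonzero `d ∈ U` is a difference of at most two such pairs, too few for that many points.
If `γ = 0`, then `f` is affine away from fewer than `s` points, which forces `L` to agree with that
affine map on `U` and then `f` to be affine everywhere, contradicting `deg f > 1`.
-/

open Finset

section Mobius

variable {F : Type*} [Field F]

theorem mul_add_ne_zero_of_ne_div {α β γ δ x : F} (hdet : α * δ - β * γ ≠ 0)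
    (hx : x ≠ -β / α) : α * x + β ≠ 0 := by
  intro h
  rcases eq_or_ne α 0 with rfl | hα
  · exact hdet (by simp_all)
  · exact hx (by field_simp; linear_combination h)

theorem mobius_sub_mobius {α β γ δ x y : F} (hx : γ * x + δ ≠ 0) (hy : γ * y + δ ≠ 0) :
    (α * x + β) / (γ * x + δ) - (α * y + β) / (γ * y + δ)
      = (α * δ - β * γ) * (x - y) / ((γ * x + δ) * (γ * y + δ)) := by
  rw [div_sub_div _ _ hx hy]
  ring

theorem card_filter_sub_mem_le_two [DecidableEq F] {ℓ : F → F} {γ δ D : F} (hγ : γ ≠ 0)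
    (hD : D ≠ 0) {G : Finset F}
    (hG : ∀ x ∈ G, ∀ y ∈ G, ℓ (x - y) * ((γ * x + δ) * (γ * y + δ)) = D * (x - y))
    {d : F} (hd : d ≠ 0) : #{x ∈ G | x - d ∈ G} ≤ 2 := by
  -- each such `x` is a root of `P`, and `P (-δ / γ) = -D d ≠ 0`
  set P : F[X] := C (ℓ d) * ((C γ * X + C δ) * (C γ * X + C (δ - γ * d))) - C (D * d)
  have hP : P ≠ 0 := fun h => by
    have := congrArg (eval (-δ / γ)) h
    simp only [P, eval_sub, eval_mul, eval_add, eval_C, eval_X, eval_zero] at this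
    rw [mul_div_cancel₀ _ hγ, neg_add_cancel, zero_mul, mul_zero, zero_sub, neg_eq_zero] at this
    exact mul_ne_zero hD hd this
  have hdeg : P.natDegree ≤ 2 := by
    simp only [P]
    compute_degree
  refine (card_le_degree_of_subset_roots fun x hx => ?_).trans hdeg
  rw [mem_val, mem_filter] at hx
  have := hG x hx.1 (x - d) hx.2
  rw [sub_sub_cancel] at this
  rw [mem_roots hP, IsRoot, eval_sub, eval_mul, eval_C, eval_C, ← this]
  simp only [eval_mul, eval_add, eval_C, eval_X]
  ring

end Mobius

section CarlitzRank

variable {F : Type*} [Field F] [Fintype F]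

theorem pow_card_sub_two_eq_inv_s8 {y : F} (hy : y ≠ 0) : y ^ (Fintype.card F - 2) = y⁻¹ := by
  have h := FiniteField.pow_card_sub_one_eq_one y hy
  rw [show Fintype.card F - 1 = Fintype.card F - 2 + 1 by
    have := Fintype.one_lt_card (α := F); omega, pow_succ] at h
  exact eq_inv_of_mul_eq_one_left h

theorem exists_eqOn_mobius_carlitzIter [DecidableEq F] (a : ℕ → F) (ha : a 0 ≠ 0) (m : ℕ) :
    ∃ α β γ δ : F, α * δ - β * γ ≠ 0 ∧ ∃ E : Finset F, #E ≤ m ∧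
      ∀ x ∉ E, γ * x + δ ≠ 0 ∧ carlitzIter m a x = (α * x + β) / (γ * x + δ) := by
  induction m with
  | zero =>
    exact ⟨a 0, a 1, 0, 1, by simpa using ha, ∅, by simp, fun x _ => by simp [carlitzIter]⟩
  | succ m ih =>
    obtain ⟨α, β, γ, δ, hdet, E, hE, hmob⟩ := ih
    -- with `c = a (m + 2)`: `((α x + β) / (γ x + δ))⁻¹ + c = ((c α + γ) x + (c β + δ)) / (α x + β)`
    refine ⟨a (m + 2) * α + γ, a (m + 2) * β + δ, α, β, fun h => hdet (by linear_combination -h),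
      insert (-β / α) E, (card_insert_le _ _).trans (by omega), fun x hx => ?_⟩
    rw [mem_insert, not_or] at hx
    have hnum := mul_add_ne_zero_of_ne_div hdet hx.1
    obtain ⟨hden, hval⟩ := hmob x hx.2
    refine ⟨hnum, ?_⟩
    rw [carlitzIter, hval, pow_card_sub_two_eq_inv_s8 (div_ne_zero hnum hden)]
    field_simp
    ring

theorem exists_eqOn_mobius_of_crk_eq [DecidableEq F] {f : F → F} {r : ℕ} (hr : crk f = r)
    (hr1 : 1 ≤ r) :
    ∃ α β γ δ : F, α * δ - β * γ ≠ 0 ∧ ∃ E : Finset F, #E ≤ r ∧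
      ∀ x ∉ E, γ * x + δ ≠ 0 ∧ f x = (α * x + β) / (γ * x + δ) := by
  have hne : {m | HasCrkAtMost f m}.Nonempty := by
    by_contra h
    rw [Set.not_nonempty_iff_eq_empty] at h
    rw [crk, h, Nat.sInf_empty] at hr
    omega
  obtain ⟨a, ha, -, hfa⟩ : HasCrkAtMost f r := hr ▸ Nat.sInf_mem hne
  simpa only [hfa] using exists_eqOn_mobius_carlitzIter a ha r

end CarlitzRank

theorem card_offDiag_le_of_card_filter_sub_mem_le {A : Type*} [AddCommGroup A] [DecidableEq A]
    {G D : Finset A} {c : ℕ} (hGD : ∀ x ∈ G, ∀ y ∈ G, x ≠ y → x - y ∈ D)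
    (hc : ∀ d ∈ D, #{x ∈ G | x - d ∈ G} ≤ c) : #G.offDiag ≤ c * #D := by
  refine card_le_mul_card_image_of_maps_to (f := fun z => z.1 - z.2) (fun z hz => ?_) c
    (fun d hd => (card_le_card_of_injOn Prod.fst (fun z hz => ?_) (fun z hz w hw hzw => ?_)).trans
      (hc d hd))
  · rw [mem_offDiag] at hz
    exact hGD _ hz.1 _ hz.2.1 hz.2.2
  · simp only [coe_filter, mem_offDiag, Set.mem_ofPred_eq] at hz ⊢
    refine ⟨hz.1.1, ?_⟩
    rw [← hz.2, sub_sub_cancel]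
    exact hz.1.2.1
  · simp only [coe_filter, Set.mem_ofPred_eq] at hz hw
    have : z.2 = w.2 := by
      have := hz.2.trans hw.2.symm
      rw [hzw] at this
      exact sub_right_injective this
    exact Prod.ext hzw this

section Codimension

variable {K F : Type*} [Ring K] [Field F] [Module K F] {U : Submodule K F} {L : F →ₗ[K] F}
  {a : F ⧸ U → F} {f : F → F}

theorem sub_eq_map_sub_of_sub_mem (hfL : ∀ x, f x = L x + a (Submodule.Quotient.mk x)) {x y : F}
    (h : x - y ∈ U) : f x - f y = L (x - y) := by
  rw [hfL, hfL, (Submodule.Quotient.eq U).mpr h, map_sub]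
  ring

theorem card_filter_sub_mem [Fintype F] [DecidablePred (· ∈ U)] (x : F) :
    #{y | x - y ∈ U} = Nat.card U := by
  rw [Nat.card_eq_fintype_card, Fintype.card_subtype]
  exact card_nbij' (x - ·) (x - ·) (fun y hy => by simpa using hy) (fun y hy => by simpa using hy)
    (fun y _ => sub_sub_cancel x y) (fun y _ => sub_sub_cancel x y)

theorem eq_affine_of_eqOn_affine [Fintype F] [DecidableEq F]
    (hfL : ∀ x, f x = L x + a (Submodule.Quotient.mk x)) {A B : F} {E : Finset F}
    (hA : ∀ x ∉ E, f x = A * x + B) (hEq : 2 * #E < Fintype.card F) (hEU : #E < Nat.card U)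
    (x : F) : f x = A * x + B := by
  classical
  have hLU : ∀ u ∈ U, L u = A * u := by
    intro u hu
    obtain ⟨y, -, hy⟩ := exists_mem_notMem_of_card_lt_card (t := univ) (s := E ∪ E.image (· - u))
      (by grw [card_union_le, card_image_le, card_univ]; omega)
    rw [mem_union, not_or, mem_image, not_exists] at hy
    have hyu : y + u ∉ E := fun h => hy.2 _ ⟨h, by ring⟩
    have := sub_eq_map_sub_of_sub_mem hfL (x := y + u) (y := y) (by simpa using hu)
    rw [hA _ hyu, hA _ hy.1, add_sub_cancel_left] at this
    linear_combination -this
  obtain ⟨x₀, hx₀U, hx₀E⟩ := exists_mem_notMem_of_card_lt_card (t := {y | x - y ∈ U}) (s := E)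
    (by convert hEU using 1; exact card_filter_sub_mem (U := U) x)
  rw [mem_filter] at hx₀U
  linear_combination sub_eq_map_sub_of_sub_mem hfL hx₀U.2 + hA x₀ hx₀E + hLU _ hx₀U.2

theorem exists_large_subset_coset_of_card_lt [Fintype F] [DecidableEq F] (U : Submodule K F)
    (E : Finset F) (h : 2 * Nat.card (F ⧸ U) + 2 * #E < Fintype.card F) :
    ∃ G : Finset F, (∀ x ∈ G, ∀ y ∈ G, x - y ∈ U) ∧ (∀ x ∈ G, x ∉ E) ∧
      Nat.card U + 3 ≤ 2 * #G := by
  classical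
  have : Fintype (F ⧸ U) := Fintype.ofFinite _
  have hq := U.card_eq_card_quotient_mul_card
  rw [Nat.card_eq_fintype_card (α := F)] at hq
  obtain ⟨V, -, hV⟩ := exists_lt_card_fiber_of_mul_lt_card_of_maps_to (s := Eᶜ) (t := univ)
    (f := (Submodule.Quotient.mk : F → F ⧸ U)) (n := Nat.card U / 2 + 1) (fun _ _ => mem_univ _) (by
      rw [card_univ, card_compl, ← Nat.card_eq_fintype_card, hq, Nat.lt_sub_iff_add_lt]
      have := Nat.mul_le_mul_left (Nat.card (F ⧸ U)) (Nat.mul_div_le (Nat.card U) 2)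
      linarith)
  refine ⟨{x ∈ Eᶜ | Submodule.Quotient.mk x = V}, fun x hx y hy => ?_, fun x hx => ?_, by omega⟩
  · rw [mem_filter] at hx hy
    exact (Submodule.Quotient.eq U).mp (hx.2.trans hy.2.symm)
  · exact mem_compl.mp (mem_filter.mp hx).1

theorem card_offDiag_le_of_eqOn_mobius [Fintype F] [DecidableEq F]
    (hfL : ∀ x, f x = L x + a (Submodule.Quotient.mk x)) {α β γ δ : F} (hγ : γ ≠ 0)
    (hdet : α * δ - β * γ ≠ 0) {G : Finset F} (hGU : ∀ x ∈ G, ∀ y ∈ G, x - y ∈ U)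
    (hG : ∀ x ∈ G, γ * x + δ ≠ 0 ∧ f x = (α * x + β) / (γ * x + δ)) :
    #G.offDiag ≤ 2 * (Nat.card U - 1) := by
  classical
  have hcard : #(({d | d ∈ U} : Finset F).erase 0) = Nat.card U - 1 := by
    rw [card_erase_of_mem (by simp), Nat.card_eq_fintype_card, Fintype.card_subtype]
  have hrel : ∀ x ∈ G, ∀ y ∈ G,
      L (x - y) * ((γ * x + δ) * (γ * y + δ)) = (α * δ - β * γ) * (x - y) := by
    intro x hx y hy
    obtain ⟨hx₀, hfx⟩ := hG x hx
    obtain ⟨hy₀, hfy⟩ := hG y hy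
    rw [← sub_eq_map_sub_of_sub_mem hfL (hGU x hx y hy), hfx, hfy, mobius_sub_mobius hx₀ hy₀,
      div_mul_cancel₀ _ (mul_ne_zero hx₀ hy₀)]
  rw [← hcard]
  exact card_offDiag_le_of_card_filter_sub_mem_le
    (fun x hx y hy hxy => mem_erase.2 ⟨sub_ne_zero.2 hxy, by simpa using hGU x hx y hy⟩)
    (fun d hd => card_filter_sub_mem_le_two hγ hdet hrel (ne_of_mem_erase hd))

theorem exists_affine_of_eqOn_mobius [Fintype F] [DecidableEq F]
    (hfL : ∀ x, f x = L x + a (Submodule.Quotient.mk x)) {α β γ δ : F}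
    (hdet : α * δ - β * γ ≠ 0) {E : Finset F}
    (hmob : ∀ x ∉ E, γ * x + δ ≠ 0 ∧ f x = (α * x + β) / (γ * x + δ))
    (h₁ : #E * Nat.card (F ⧸ U) < Fintype.card F)
    (h₂ : 2 * Nat.card (F ⧸ U) + 2 * #E < Fintype.card F) :
    ∃ A B : F, ∀ x, f x = A * x + B := by
  rcases eq_or_ne γ 0 with rfl | hγ
  · have hδ : δ ≠ 0 := by rintro rfl; simp at hdet
    have hEU : #E < Nat.card U := by
      rw [← Nat.card_eq_fintype_card, U.card_eq_card_quotient_mul_card] at h₁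
      exact Nat.lt_of_mul_lt_mul_right h₁
    refine ⟨α / δ, β / δ, eq_affine_of_eqOn_affine hfL (fun x hx => ?_) (by omega) hEU⟩
    rw [(hmob x hx).2, zero_mul, zero_add]
    ring
  · obtain ⟨G, hGU, hGE, hG⟩ := exists_large_subset_coset_of_card_lt U E h₂
    have hpairs := card_offDiag_le_of_eqOn_mobius hfL hγ hdet hGU (fun x hx => hmob x (hGE x hx))
    rw [offDiag_card] at hpairs
    have hU : 0 < Nat.card U := Nat.card_pos
    have : #G * #G + 2 ≤ 2 * Nat.card U + #G := by
      have := Nat.le_mul_self #G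
      omega
    exfalso
    nlinarith [sq_nonneg ((2 : ℤ) * #G - 5)]

end Codimension

theorem natDegree_interp_le_one {F : Type*} [Field F] [Fintype F] [DecidableEq F] {f : F → F}
    {A B : F} (h : ∀ x, f x = A * x + B) : (interp f).natDegree ≤ 1 := by
  have hlin := Lagrange.eq_interpolate (s := univ) (v := id) (f := C A * X + C B)
    (Set.injOn_id _)
    (degree_linear_le.trans_lt (by rw [card_univ]; exact_mod_cast Fintype.one_lt_card))
  have : interp f = C A * X + C B := by
    rw [hlin, interp]
    exact Lagrange.interpolate_eq_of_values_eq_on _ _ (fun x _ => by simp [h])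
  rw [this]
  exact natDegree_linear_le

theorem exists_repr_card_quotient_eq_addInd {p n : ℕ} [Fact p.Prime] {F : Type*} [Field F]
    [Fintype F] [Algebra (ZMod p) F] (hcard : Fintype.card F = p ^ n) (f : F → F) :
    ∃ (L : F →ₗ[ZMod p] F) (U : Submodule (ZMod p) F) (a : F ⧸ U → F),
      Nat.card (F ⧸ U) = addInd p n f ∧ ∀ x, f x = L x + a (Submodule.Quotient.mk x) := by
  have hn : HasCodimAtMost p n f n :=
    ⟨0, ⊥, fun v => f ((Submodule.quotEquivOfEqBot ⊥ rfl) v), by simp,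
      fun x => by simp [Submodule.quotEquivOfEqBot_apply_mk]⟩
  obtain ⟨L, U, a, hU, hfL⟩ : HasCodimAtMost p n f (codim p n f) :=
    Nat.sInf_mem (s := {k | HasCodimAtMost p n f k}) ⟨n, hn⟩
  refine ⟨L, U, a, ?_, hfL⟩
  have hk : codim p n f ≤ n := Nat.sInf_le hn
  have hF : Module.finrank (ZMod p) F = n := by
    rw [Module.card_eq_pow_finrank (K := ZMod p), ZMod.card] at hcard
    exact Nat.pow_right_injective (Fact.out : p.Prime).two_le hcard
  have := U.finrank_quotient_add_finrank
  rw [Module.natCard_eq_pow_finrank (K := ZMod p), Nat.card_zmod, addInd]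
  congr 1
  omega

theorem stmt8_general (p n : ℕ) [Fact p.Prime] {F : Type*} [Field F] [Fintype F]
    [Algebra (ZMod p) F] [DecidableEq F] (hcard : Fintype.card F = p ^ n)
    (f : F → F) (r : ℕ) (hr : crk f = r) (hr1 : 1 ≤ r)
    (hdeg : 1 < (interp f).natDegree) :
    min ((Fintype.card F : ℝ) / r) (((Fintype.card F : ℝ) - 2 * r) / 2)
      ≤ (addInd p n f : ℝ) := by
  obtain ⟨α, β, γ, δ, hdet, E, hEr, hmob⟩ := exists_eqOn_mobius_of_crk_eq hr hr1
  obtain ⟨L, U, a, hU, hfL⟩ := exists_repr_card_quotient_eq_addInd hcard f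
  by_contra! hlt
  rw [lt_min_iff, lt_div_iff₀ (by positivity), lt_div_iff₀ two_pos, ← hU] at hlt
  have h₁ : #E * Nat.card (F ⧸ U) < Fintype.card F := by
    grw [hEr]
    exact_mod_cast (mul_comm (r : ℝ) _).trans_lt hlt.1
  have h₂ : 2 * Nat.card (F ⧸ U) + 2 * #E < Fintype.card F := by
    grw [hEr]
    exact_mod_cast (by linarith [hlt.2] : (2 * Nat.card (F ⧸ U) + 2 * r : ℝ) < Fintype.card F)
  obtain ⟨A, B, hAB⟩ := exists_affine_of_eqOn_mobius hfL hdet hmob h₁ h₂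
  exact hdeg.not_ge (natDegree_interp_le_one hAB)

/-- Let `f` be a permutation of `𝔽_q` of Carlitz rank `r ≥ 1` with
`deg f > 1` (equivalently, not `𝔽_q`-affine). Then `AddInd f ≥ min (q/r) ((q - 2r)/2)`. -/
theorem stmt8 (p n : ℕ) [Fact p.Prime] (hn : 1 ≤ n) {F : Type*} [Field F] [Fintype F]
    [Algebra (ZMod p) F] [DecidableEq F] (hcard : Fintype.card F = p ^ n)
    (f : F → F) (hf : Function.Bijective f) (r : ℕ) (hr : crk f = r) (hr1 : 1 ≤ r)
    (hdeg : 1 < (interp f).natDegree) :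
    min ((Fintype.card F : ℝ) / r) (((Fintype.card F : ℝ) - 2 * r) / 2)
      ≤ (addInd p n f : ℝ) :=
  stmt8_general p n hcard f r hr hr1 hdeg
end

section
/- Let 1 ≤ k < n with (k, p) ≠ (1, 2), let U be an F_p-subspace of F_q of codimension k, and define f_2 : F_q → F_q by f_2(x) = 1 if x ∈ U and f_2(x) = 0 if x ∉ U. Then AddInd(f_2) = p^k. Moreover, if (k, p) = (1, 2), then f_2 has codimension 0. -/
open Polynomial

/-!
If `f = L + a ∘ π_W` is the indicator of `U`, then for `w ∈ W` the difference `f (x + w) - f x = L w`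
does not depend on `x`. At `x = 0` it is `-1` unless `w ∈ U`, while if `U` has more than two
cosets some `x` has both `x` and `x + w` outside `U`, making it `0`. Hence `W ≤ U` and
`codim f ≥ codim U`. If `U` has index two in characteristic two, `x ↦ [x ∉ U]` is additive and
`f = 1 + [· ∉ U]` has codimension `0`.
-/

open Module

namespace AddSubgroup

variable {G : Type*} [AddCommGroup G] (H : AddSubgroup G)

theorem exists_notMem_and_add_notMem (hH : 2 < H.index) (w : G) :
    ∃ x, x ∉ H ∧ x + w ∉ H := by
  by_contra! h
  have hsurj : Function.Surjective
      (fun b : Bool => if b then (0 : G ⧸ H) else ((-w : G) : G ⧸ H)) := by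
    intro c
    induction c using QuotientAddGroup.induction_on with
    | H x =>
      by_cases hx : x ∈ H
      · exact ⟨true, ((QuotientAddGroup.eq_zero_iff x).mpr hx).symm⟩
      · refine ⟨false, (QuotientAddGroup.eq).mpr ?_⟩
        simpa [add_comm] using h x hx
  have := Nat.card_le_card_of_surjective _ hsurj
  rw [Nat.card_eq_fintype_card (α := Bool), Fintype.card_bool, ← index_eq_card] at this
  omega

theorem mem_of_forall_add_eq_add_const {S : Type*} [Ring S] [Nontrivial S] {f : G → S}
    (hH : 2 < H.index) (h1 : ∀ x ∈ H, f x = 1) (h0 : ∀ x ∉ H, f x = 0)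
    {w : G} {c : S} (hw : ∀ x, f (x + w) = f x + c) : w ∈ H := by
  by_contra hwH
  obtain ⟨x, hx, hxw⟩ := H.exists_notMem_and_add_notMem hH w
  have hc : 0 = c := by simpa [h0 _ hxw, h0 _ hx] using hw x
  simpa [← hc, h0 w hwH, h1 0 H.zero_mem] using hw 0

theorem exists_addMonoidHom_of_index_eq_two {S : Type*} [Ring S] [CharP S 2]
    (hH : H.index = 2) : ∃ φ : G →+ S, (∀ x ∈ H, φ x = 0) ∧ ∀ x ∉ H, φ x = 1 := by
  classical
  refine ⟨{ toFun := fun x => if x ∈ H then 0 else 1, map_zero' := by simp, map_add' := ?_ },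
    fun x hx => if_pos hx, fun x hx => if_neg hx⟩
  intro x y
  by_cases hx : x ∈ H <;> by_cases hy : y ∈ H <;>
    simp [hx, hy, add_mem_iff_of_index_two hH, CharTwo.add_self_eq_zero]

end AddSubgroup

theorem Submodule.index_toAddSubgroup_eq_card_pow {K V : Type*} [DivisionRing K] [Finite K]
    [AddCommGroup V] [Module K V] [Module.Finite K V] (U : Submodule K V) :
    U.toAddSubgroup.index = Nat.card K ^ (finrank K V - finrank K U) := by
  have hmul := U.toAddSubgroup.index_mul_card
  rw [show Nat.card U.toAddSubgroup = Nat.card U from rfl, Module.natCard_eq_pow_finrank (K := K),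
    Module.natCard_eq_pow_finrank (K := K) (V := V),
    ← Nat.sub_add_cancel (Submodule.finrank_le U), pow_add] at hmul
  exact Nat.eq_of_mul_eq_mul_right (pow_pos Nat.card_pos _) hmul

theorem Nat.Prime.two_lt_pow {p k : ℕ} (hp : p.Prime) (hk : 1 ≤ k) (h : ¬(k = 1 ∧ p = 2)) :
    2 < p ^ k := by
  by_cases hp2 : p = 2
  · subst hp2
    calc 2 < 2 ^ 2 := by norm_num
      _ ≤ 2 ^ k := Nat.pow_le_pow_right (by norm_num) (by omega)
  · calc 2 < p := lt_of_le_of_ne hp.two_le (Ne.symm hp2)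
      _ ≤ p ^ k := Nat.le_self_pow (by omega) p

theorem finrank_zmod_eq_of_card_eq_pow {p n : ℕ} [Fact p.Prime] {F : Type*} [AddCommGroup F]
    [Module (ZMod p) F] [Finite F] (hcard : Nat.card F = p ^ n) : finrank (ZMod p) F = n := by
  rw [Module.natCard_eq_pow_finrank (K := ZMod p), Nat.card_zmod] at hcard
  exact Nat.pow_right_injective (Fact.out : p.Prime).two_le hcard

section IndicatorOfSubspace

variable {p n : ℕ} {F : Type*} [Field F] [Fintype F] [Algebra (ZMod p) F] {f : F → F}
  {U : Submodule (ZMod p) F}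

theorem hasCodimAtMost_of_indicator {k : ℕ} (hU : finrank (ZMod p) U = n - k)
    (h1 : ∀ x ∈ U, f x = 1) (h0 : ∀ x ∉ U, f x = 0) : HasCodimAtMost p n f k := by
  classical
  refine ⟨0, U, fun v => if v = 0 then 1 else 0, hU, fun x => ?_⟩
  by_cases hx : x ∈ U
  · simp [h1 x hx, (Submodule.Quotient.mk_eq_zero U).mpr hx]
  · simp [h0 x hx, Submodule.Quotient.mk_eq_zero, hx]

theorem le_of_hasCodimAtMost_indicator [Fact p.Prime] {k j : ℕ} (hkn : k ≤ n)
    (hU : finrank (ZMod p) U = n - k) (hindex : 2 < U.toAddSubgroup.index)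
    (h1 : ∀ x ∈ U, f x = 1) (h0 : ∀ x ∉ U, f x = 0) (hj : HasCodimAtMost p n f j) : k ≤ j := by
  obtain ⟨L, W, a, hW, hf⟩ := hj
  have hWU : W ≤ U := fun w hw =>
    U.toAddSubgroup.mem_of_forall_add_eq_add_const (c := L w) hindex h1 h0 fun x => by
      rw [hf, hf, map_add, Submodule.Quotient.mk_add,
        (Submodule.Quotient.mk_eq_zero W).mpr hw, add_zero, add_right_comm]
  have := Submodule.finrank_mono hWU
  omega

end IndicatorOfSubspace

theorem hasCodimAtMost_zero_of_index_eq_two {n : ℕ} {F : Type*} [Field F] [Fintype F]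
    [Algebra (ZMod 2) F] {f : F → F} {U : Submodule (ZMod 2) F}
    (hn : finrank (ZMod 2) F = n) (hindex : U.toAddSubgroup.index = 2)
    (h1 : ∀ x ∈ U, f x = 1) (h0 : ∀ x ∉ U, f x = 0) : HasCodimAtMost 2 n f 0 := by
  have : CharP F 2 := charP_of_injective_algebraMap (algebraMap (ZMod 2) F).injective 2
  obtain ⟨φ, hφ0, hφ1⟩ := U.toAddSubgroup.exists_addMonoidHom_of_index_eq_two (S := F) hindex
  refine ⟨φ.toZModLinearMap 2, ⊤, fun _ => 1, by rw [finrank_top, hn, Nat.sub_zero], fun x => ?_⟩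
  by_cases hx : x ∈ U
  · simp [h1 x hx, hφ0 x hx]
  · simp [h0 x hx, hφ1 x hx, CharTwo.add_self_eq_zero]

theorem stmt14_general (p n : ℕ) [Fact p.Prime] {F : Type*} [Field F] [Fintype F]
    [Algebra (ZMod p) F] (hcard : Fintype.card F = p ^ n)
    (k : ℕ) (hk : 1 ≤ k) (hkn : k < n)
    (U : Submodule (ZMod p) F) [DecidablePred (· ∈ U)]
    (hU : Module.finrank (ZMod p) ↥U = n - k)
    (f2 : F → F) (hf2 : ∀ x : F, f2 x = if x ∈ U then 1 else 0) :
    (¬(k = 1 ∧ p = 2) → addInd p n f2 = p ^ k) ∧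
    ((k = 1 ∧ p = 2) → codim p n f2 = 0) := by
  have hF : finrank (ZMod p) F = n :=
    finrank_zmod_eq_of_card_eq_pow (by rwa [Nat.card_eq_fintype_card])
  have hindex : U.toAddSubgroup.index = p ^ k := by
    rw [U.index_toAddSubgroup_eq_card_pow, Nat.card_zmod, hF, hU]
    congr 1
    omega
  have h1 : ∀ x ∈ U, f2 x = 1 := fun x hx => by simp [hf2, hx]
  have h0 : ∀ x ∉ U, f2 x = 0 := fun x hx => by simp [hf2, hx]
  refine ⟨fun hne => ?_, ?_⟩
  · have hk_mem := hasCodimAtMost_of_indicator hU h1 h0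
    have hcodim : codim p n f2 = k :=
      le_antisymm (Nat.sInf_le hk_mem) <| le_csInf ⟨k, hk_mem⟩ fun j hj =>
        le_of_hasCodimAtMost_indicator hkn.le hU
          (hindex ▸ (Fact.out : p.Prime).two_lt_pow hk hne) h1 h0 hj
    rw [addInd, hcodim]
  · rintro ⟨rfl, rfl⟩
    exact Nat.eq_zero_of_le_zero <| Nat.sInf_le <|
      hasCodimAtMost_zero_of_index_eq_two hF hindex h1 h0

/-- Let `1 ≤ k < n`, let `U` be an `𝔽_p`-subspace of `𝔽_q` of codimension
`k`, and let `f₂` be the indicator function of `U`. If `(k, p) ≠ (1, 2)` then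
`AddInd f₂ = p^k`; moreover if `(k, p) = (1, 2)` then `f₂` has codimension `0`. -/
theorem stmt14 (p n : ℕ) [Fact p.Prime] (hn : 1 ≤ n) {F : Type*} [Field F] [Fintype F]
    [Algebra (ZMod p) F] (hcard : Fintype.card F = p ^ n)
    (k : ℕ) (hk : 1 ≤ k) (hkn : k < n)
    (U : Submodule (ZMod p) F) [DecidablePred (· ∈ U)]
    (hU : Module.finrank (ZMod p) ↥U = n - k)
    (f2 : F → F) (hf2 : ∀ x : F, f2 x = if x ∈ U then 1 else 0) :
    (¬(k = 1 ∧ p = 2) → addInd p n f2 = p ^ k) ∧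
    ((k = 1 ∧ p = 2) → codim p n f2 = 0) :=
  stmt14_general p n hcard k hk hkn U hU f2 hf2
end

section
/- Let f be the discrete-logarithm permutation of F_{p^n} defined below, and q = p^n. Then the multiplicative index of f satisfies Ind(f) ≥ (q − 1)/6. -/
open Polynomial

/-- For `ζ` a primitive element of `𝔽_q` and `g : 𝔽_q → 𝔽_q` with `g 0 = 0`, `g` has
multiplicative index at most `ℓ` (for `ℓ ∣ q - 1`) if there are `r ≥ 1` and
`a_0, …, a_{ℓ-1} ∈ 𝔽_q^*` with `g(x) = a_i x^r` on each cyclotomic coset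
`C_i = ζ^i C_0`, where `C_0 = {y^ℓ : y ≠ 0}` is the subgroup of nonzero `ℓ`-th powers. -/
def HasMulIndAtMost {F : Type*} [Field F] [Fintype F] (ζ : F) (g : F → F) (ℓ : ℕ) : Prop :=
  ℓ ∣ (Fintype.card F - 1) ∧
  ∃ r : ℕ, 0 < r ∧ ∃ a : ℕ → F, (∀ i < ℓ, a i ≠ 0) ∧
    ∀ i < ℓ, ∀ y : F, y ≠ 0 → g (ζ ^ i * y ^ ℓ) = a i * (ζ ^ i * y ^ ℓ) ^ r

/-- The multiplicative index `Ind g` of `g` (with `g 0 = 0`) is the smallest such `ℓ`. -/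
noncomputable def mulInd {F : Type*} [Field F] [Fintype F] (ζ : F) (g : F → F) : ℕ :=
  sInf {ℓ | HasMulIndAtMost ζ g ℓ}

/-- For general `g`, the multiplicative index is that of `x ↦ g x - g 0`. -/
noncomputable def mulInd' {F : Type*} [Field F] [Fintype F] (ζ : F) (g : F → F) : ℕ :=
  mulInd ζ (fun x => g x - g 0)


/-! On the coset `C₀` the function `g = f - f 0` is `a₀ xʳ`, and on `ζ C₀` it is `a₁ xʳ`.
Passing from `ζ^x` to `ζ^(x+1)` adds exactly `1` to `f` whenever the last base-`p` digit of `x`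
is not `p - 1`; for such `x ≡ 0 (mod ℓ)` this gives `ζ^(xr) (a₁ ζ^r - a₀) = 1`, which determines
`ζ^(xr)` and hence `g (ζ^x) = a₀ ζ^(xr)`. Taking `x = 0` and `x ∈ {ℓ, 2ℓ}` (one of the two has last
digit different from `p - 1`) contradicts injectivity of the digit map unless `q ≤ 2ℓ + 2`. -/

section Digits

variable {R : Type*} {p n : ℕ}

def evalDigits [Semiring R] (p n : ℕ) (lam : R) (x : ℕ) : R :=
  ∑ i : Fin n, ((x / p ^ (i : ℕ) % p : ℕ) : R) * lam ^ (i : ℕ)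

theorem mod_pow_eq_sum_digits (p x m : ℕ) :
    x % p ^ m = ∑ k ∈ Finset.range m, x / p ^ k % p * p ^ k := by
  induction m with
  | zero => simp [Nat.mod_one]
  | succ m ih => rw [Finset.sum_range_succ, ← ih, pow_succ, Nat.mod_mul, Nat.mul_comm]

theorem LinearIndependent.natCast_modEq_of_sum_eq {ι : Type*} [Fintype ι] [Semiring R]
    [Module (ZMod p) R] {v : ι → R} (hv : LinearIndependent (ZMod p) v) {c d : ι → ℕ}
    (h : ∑ i, (c i : R) * v i = ∑ i, (d i : R) * v i) (i : ι) : c i ≡ d i [MOD p] :=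
  (ZMod.natCast_eq_natCast_iff _ _ _).mp <|
    Fintype.linearIndependent_iffₛ.mp hv (fun i => (c i : ZMod p)) (fun i => d i) (by simpa only [Nat.cast_smul_eq_nsmul, nsmul_eq_mul] using h) i

theorem evalDigits_succ [Semiring R] (lam : R) (hp : 0 < p) (hn : 0 < n) {x : ℕ}
    (hx : x % p ≠ p - 1) : evalDigits p n lam (x + 1) = evalDigits p n lam x + 1 := by
  have hlt : x % p + 1 < p := by have := Nat.mod_lt x hp; omega
  have hx1 : x + 1 = p * (x / p) + (x % p + 1) := by have := Nat.div_add_mod x p; omega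
  have hmod : (x + 1) % p = x % p + 1 := by rw [hx1, Nat.mul_add_mod, Nat.mod_eq_of_lt hlt]
  have hdiv : ∀ k, (x + 1) / p ^ (k + 1) = x / p ^ (k + 1) := fun k => by
    rw [pow_succ', ← Nat.div_div_eq_div_mul, ← Nat.div_div_eq_div_mul, hx1, Nat.mul_add_div hp,
      Nat.div_eq_of_lt hlt, add_zero]
  obtain ⟨m, rfl⟩ := Nat.exists_eq_succ_of_ne_zero hn.ne'
  simp only [evalDigits, Fin.sum_univ_succ, Fin.val_zero, Fin.val_succ, pow_zero, Nat.div_one,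
    mul_one, hmod, hdiv, Nat.cast_add, Nat.cast_one]
  exact add_right_comm _ _ _

theorem evalDigits_injOn [Semiring R] [Module (ZMod p) R] {lam : R}
    (hv : LinearIndependent (ZMod p) fun i : Fin n => lam ^ (i : ℕ)) :
    Set.InjOn (evalDigits p n lam) (Set.Iio (p ^ n)) := by
  intro x hx y hy h
  have hdigit : ∀ k < n, x / p ^ k % p = y / p ^ k % p := fun k hk => by
    simpa only [Nat.ModEq, Nat.mod_mod] using hv.natCast_modEq_of_sum_eq h ⟨k, hk⟩
  rw [← Nat.mod_eq_of_lt hx, ← Nat.mod_eq_of_lt hy, mod_pow_eq_sum_digits,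
    mod_pow_eq_sum_digits]
  exact Finset.sum_congr rfl fun k hk => by rw [hdigit k (Finset.mem_range.mp hk)]

theorem eq_pow_sub_one_of_evalDigits_eq_neg_sum [Ring R] [Module (ZMod p) R] {lam : R}
    (hp : 0 < p) (hv : LinearIndependent (ZMod p) fun i : Fin n => lam ^ (i : ℕ)) {x : ℕ}
    (hx : x < p ^ n) (h : evalDigits p n lam x = -∑ i : Fin n, lam ^ (i : ℕ)) :
    x = p ^ n - 1 := by
  have hpR : (p : R) = 0 := by
    rw [← Nat.smul_one_eq_cast, ← Nat.cast_smul_eq_nsmul (ZMod p), ZMod.natCast_self, zero_smul]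
  have h' : evalDigits p n lam x = ∑ i : Fin n, ((p - 1 : ℕ) : R) * lam ^ (i : ℕ) := by
    simp [h, Nat.cast_pred hp, hpR, ← Finset.sum_neg_distrib]
  have hdigit : ∀ k < n, x / p ^ k % p = p - 1 := fun k hk => by
    simpa only [Nat.ModEq, Nat.mod_mod, Nat.mod_eq_of_lt (Nat.sub_lt hp one_pos)] using
      hv.natCast_modEq_of_sum_eq h' ⟨k, hk⟩
  calc x = ∑ k ∈ Finset.range n, x / p ^ k % p * p ^ k := by
        rw [← mod_pow_eq_sum_digits, Nat.mod_eq_of_lt hx]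
    _ = (∑ k ∈ Finset.range n, p ^ k) * (p - 1) := by
        rw [Finset.sum_mul]
        exact Finset.sum_congr rfl fun k hk => by
          rw [hdigit k (Finset.mem_range.mp hk), mul_comm]
    _ = p ^ n - 1 := geom_sum_mul_of_one_le hp n

end Digits

theorem exists_mul_mod_ne_sub_one {p : ℕ} (hp : 2 ≤ p) (ℓ : ℕ) :
    ∃ k, 1 ≤ k ∧ k ≤ 2 ∧ ℓ * k % p ≠ p - 1 := by
  by_contra! H
  have h1 : ℓ % p = p - 1 := by simpa only [mul_one] using H 1 le_rfl one_le_two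
  have hℓ : ℓ ≡ 0 [MOD p] := Nat.ModEq.add_left_cancel' ℓ <| by
    rw [Nat.ModEq, ← mul_two, H 2 one_le_two le_rfl, add_zero, h1]
  rw [Nat.ModEq, Nat.zero_mod, h1] at hℓ
  omega

section MulInd

variable {F : Type*} [Field F] [Fintype F] {ζ : F} {g : F → F} {ℓ : ℕ}

theorem pow_ne_zero_of_forall_exists_pow_eq (hζ : ∀ a : F, a ≠ 0 → ∃ x : ℕ, ζ ^ x = a) {i : ℕ}
    (hi : i < Fintype.card F - 1) : ζ ^ i ≠ 0 := by
  classical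
  rcases Nat.eq_zero_or_pos i with rfl | hi0
  · simp
  refine pow_ne_zero _ fun hζ0 => ?_
  subst hζ0
  have hsub : (Finset.univ : Finset F) ⊆ {0, 1} := fun a _ => by
    by_cases ha : a = 0
    · simp [ha]
    · obtain ⟨x, hx⟩ := hζ a ha
      rcases x with _ | x <;> simp_all
  have := (Finset.card_le_card hsub).trans Finset.card_le_two
  rw [Finset.card_univ] at this
  omega

theorem hasMulIndAtMost_card_sub_one
    (h : ∀ i < Fintype.card F - 1, ζ ^ i ≠ 0 ∧ g (ζ ^ i) ≠ 0) :
    HasMulIndAtMost ζ g (Fintype.card F - 1) := by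
  refine ⟨dvd_rfl, 1, one_pos, fun i => g (ζ ^ i) / ζ ^ i,
    fun i hi => div_ne_zero (h i hi).2 (h i hi).1, fun i hi y hy => ?_⟩
  rw [FiniteField.pow_card_sub_one_eq_one y hy, mul_one, pow_one, div_mul_cancel₀ _ (h i hi).1]

theorem HasMulIndAtMost.pos (h : HasMulIndAtMost ζ g ℓ) : 0 < ℓ := by
  refine Nat.pos_of_ne_zero fun hℓ => ?_
  have := Nat.eq_zero_of_zero_dvd (hℓ ▸ h.1)
  have := Fintype.one_lt_card (α := F)
  omega

theorem HasMulIndAtMost.apply_pow_mul_eq (h : HasMulIndAtMost ζ g ℓ) (hζ : ζ ≠ 0) {u v : ℕ}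
    (hu : g (ζ ^ (ℓ * u + 1)) = g (ζ ^ (ℓ * u)) + 1)
    (hv : g (ζ ^ (ℓ * v + 1)) = g (ζ ^ (ℓ * v)) + 1) :
    g (ζ ^ (ℓ * u)) = g (ζ ^ (ℓ * v)) := by
  have hℓ := h.pos
  obtain ⟨-, r, -, a, -, ha⟩ := h
  have hcoset : ∀ i < ℓ, ∀ w, g (ζ ^ (i + ℓ * w)) = a i * (ζ ^ (i + ℓ * w)) ^ r :=
    fun i hi w => by simpa only [← pow_mul', ← pow_add] using ha i hi (ζ ^ w) (pow_ne_zero _ hζ)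
  have hcoset0 : ∀ w, g (ζ ^ (ℓ * w)) = a 0 * (ζ ^ (ℓ * w)) ^ r := by
    simpa only [zero_add] using hcoset 0 hℓ
  have hstep : ∀ w, g (ζ ^ (ℓ * w + 1)) = g (ζ ^ (ℓ * w)) + 1 →
      (ζ ^ (ℓ * w)) ^ r * (a (1 % ℓ) * ζ ^ r - a 0) = 1 := by
    intro w hw
    -- `ζ ^ (ℓ * w + 1)` lies in the coset of index `1 % ℓ`, which is `C₀` itself when `ℓ = 1`.
    have h1 := hcoset (1 % ℓ) (Nat.mod_lt 1 hℓ) (w + 1 / ℓ)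
    rw [show 1 % ℓ + ℓ * (w + 1 / ℓ) = ℓ * w + 1 by rw [mul_add]; linarith [Nat.mod_add_div 1 ℓ],
      hw, hcoset0, pow_succ, mul_pow] at h1
    linear_combination -h1
  have hu' := hstep u hu
  have hv' := hstep v hv
  have hpow : (ζ ^ (ℓ * u)) ^ r = (ζ ^ (ℓ * v)) ^ r :=
    mul_right_cancel₀ (right_ne_zero_of_mul_eq_one hu') (hu'.trans hv'.symm)
  rw [hcoset0, hcoset0, hpow]

theorem card_le_of_hasMulIndAtMost {p : ℕ} (hp : 2 ≤ p)
    (hsucc : ∀ x, x % p ≠ p - 1 → x + 1 < Fintype.card F - 1 → g (ζ ^ (x + 1)) = g (ζ ^ x) + 1)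
    (hinj : Set.InjOn (fun x => g (ζ ^ x)) (Set.Iio (Fintype.card F - 1)))
    (h : HasMulIndAtMost ζ g ℓ) : Fintype.card F ≤ 2 * ℓ + 2 := by
  by_contra! hcard
  have hℓ := h.pos
  have hζ : ζ ≠ 0 := by
    rintro rfl
    have : 1 = 2 := hinj (by simp; omega) (by simp; omega) (by simp)
    omega
  obtain ⟨k, hk1, hk2, hkp⟩ := exists_mul_mod_ne_sub_one hp ℓ
  have hk : ℓ * k ≤ 2 * ℓ := by nlinarith
  have hfirst : g (ζ ^ (ℓ * 0 + 1)) = g (ζ ^ (ℓ * 0)) + 1 :=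
    hsucc 0 (by rw [Nat.zero_mod]; omega) (by omega)
  have heq := h.apply_pow_mul_eq hζ hfirst (hsucc (ℓ * k) hkp (by omega))
  have : ℓ * 0 = ℓ * k := hinj (by simp; omega) (by simp; omega) heq
  nlinarith

end MulInd

theorem stmt18_general (p n : ℕ) [Fact p.Prime] {F : Type*} [Field F]
    [Fintype F] [Algebra (ZMod p) F] (hcard : Fintype.card F = p ^ n)
    (ζ : F) (hζ : ∀ a : F, a ≠ 0 → ∃ x : ℕ, ζ ^ x = a)
    (lam : F) (hlam : ∃ b : Module.Basis (Fin n) (ZMod p) F, ∀ i : Fin n, b i = lam ^ (i : ℕ))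
    (f : F → F)
    (hf : ∀ x : ℕ, x < p ^ n - 1 →
      f (ζ ^ x) = ∑ i : Fin n, ((x / p ^ (i : ℕ) % p : ℕ) : F) * lam ^ (i : ℕ))
    (hf0 : f 0 = - ∑ i : Fin n, lam ^ (i : ℕ)) :
    ((Fintype.card F - 1 : ℕ) : ℝ) / 6 ≤ (mulInd' ζ f : ℝ) := by
  obtain ⟨b, hb⟩ := hlam
  have hv : LinearIndependent (ZMod p) fun i : Fin n => lam ^ (i : ℕ) := by
    simpa only [← hb] using b.linearIndependent
  have hp : 2 ≤ p := (Fact.out : p.Prime).two_le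
  have hn : 0 < n := Nat.pos_of_ne_zero fun h0 => by
    have := Fintype.one_lt_card (α := F)
    simp [hcard, h0] at this
  have hf' : ∀ x < Fintype.card F - 1, f (ζ ^ x) = evalDigits p n lam x := hcard ▸ hf
  set g : F → F := fun x => f x - f 0
  have hsucc : ∀ x, x % p ≠ p - 1 → x + 1 < Fintype.card F - 1 →
      g (ζ ^ (x + 1)) = g (ζ ^ x) + 1 := fun x hx hx1 => by
    simp only [g, hf' _ hx1, hf' x (by omega), evalDigits_succ (p := p) lam (by omega) hn hx]
    ring
  have hinj : Set.InjOn (fun x => g (ζ ^ x)) (Set.Iio (Fintype.card F - 1)) :=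
    fun x hx y hy hxy => by
    have hxy' : evalDigits p n lam x = evalDigits p n lam y := by
      rw [← hf' x hx, ← hf' y hy]; simpa [g] using hxy
    exact evalDigits_injOn hv (by simp at hx ⊢; omega) (by simp at hy ⊢; omega) hxy'
  have hne : ∀ i < Fintype.card F - 1, ζ ^ i ≠ 0 ∧ g (ζ ^ i) ≠ 0 := fun i hi =>
    ⟨pow_ne_zero_of_forall_exists_pow_eq hζ hi, sub_ne_zero.mpr fun h => by
      have := eq_pow_sub_one_of_evalDigits_eq_neg_sum (by omega) hv (by omega)
        ((hf' i hi).symm.trans (h.trans hf0))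
      omega⟩
  have hind : HasMulIndAtMost ζ g (mulInd' ζ f) :=
    Nat.sInf_mem (s := {ℓ | HasMulIndAtMost ζ g ℓ}) ⟨_, hasMulIndAtMost_card_sub_one hne⟩
  have hbound := card_le_of_hasMulIndAtMost hp hsucc hinj hind
  have hpos := hind.pos
  rw [div_le_iff₀ (by norm_num)]
  exact_mod_cast (by omega : Fintype.card F - 1 ≤ mulInd' ζ f * 6)

/-- Let `f` be the discrete-logarithm permutation of `𝔽_{p^n}` (see below)
and `q = p^n`. Then the multiplicative index of `f` satisfies `Ind f ≥ (q - 1)/6`. -/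
theorem stmt18 (p n : ℕ) [Fact p.Prime] (hn : 1 ≤ n) {F : Type*} [Field F]
    [Fintype F] [Algebra (ZMod p) F] (hcard : Fintype.card F = p ^ n)
    (ζ : F) (hζ : ∀ a : F, a ≠ 0 → ∃ x : ℕ, ζ ^ x = a)
    (lam : F) (hlam : ∃ b : Module.Basis (Fin n) (ZMod p) F, ∀ i : Fin n, b i = lam ^ (i : ℕ))
    (f : F → F)
    (hf : ∀ x : ℕ, x < p ^ n - 1 →
      f (ζ ^ x) = ∑ i : Fin n, ((x / p ^ (i : ℕ) % p : ℕ) : F) * lam ^ (i : ℕ))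
    (hf0 : f 0 = - ∑ i : Fin n, lam ^ (i : ℕ)) :
    ((Fintype.card F - 1 : ℕ) : ℝ) / 6 ≤ (mulInd' ζ f : ℝ) :=
  stmt18_general p n hcard ζ hζ lam hlam f hf hf0
end
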